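/- Let X be a set and let φ, ψ : X → [0,1] with ψ ≤ φ pointwise, X = {x₁,…,x_n} finite, and suppose φ is nondecreasing along the enumeration (φ(x₁) ≤ … ≤ φ(x_n)). Define ψ₁(x) = max{ψ(x), ψ(x₁)} and recursively ψ_{i+1}(x_j) = ψ_i(x_j) for j ≤ i and ψ_{i+1}(x_j) = max{ψ_i(x_{i+1}), ψ_i(x_j)} for j ≥ i+1. Then ψ ≤ ψ₁ ≤ … ≤ ψ_{n−1} ≤ φ, ψ is comonotone with ψ₁, each ψ_i is comonotone with ψ_{i+1}, and ψ_{n−1} is nondecreasing (hence comonotone with φ). -/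
import Mathlib


open unitInterval

noncomputable section

/-- Two `[0,1]`-valued functions are comonotone. -/
def Comonotone {X : Type*} (f g : X → I) : Prop :=
  ∀ x y : X, 0 ≤ ((f x : ℝ) - (f y : ℝ)) * ((g x : ℝ) - (g y : ℝ))

/-- One step of the recursive construction: replace the values at indices `≥ i` by
their max with the value at `i`. -/
def step (n : ℕ) (f : Fin n → I) (i : Fin n) : Fin n → I :=
  fun j => if (j : ℕ) < (i : ℕ) then f j else f i ⊔ f j

/-- The sequence `ψ = ψ₀, ψ₁, …` of the recursive construction. -/
def seqPsi (n : ℕ) (ψ : Fin n → I) : ℕ → Fin n → I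
  | 0 => ψ
  | k + 1 => if h : k < n then step n (seqPsi n ψ k) ⟨k, h⟩ else seqPsi n ψ k

lemma seqPsi_succ_of_lt (n : ℕ) (ψ : Fin n → I) {k : ℕ} (h : k < n) :
    seqPsi n ψ (k + 1) = step n (seqPsi n ψ k) ⟨k, h⟩ := by
  simp [seqPsi, h]

lemma le_step (n : ℕ) (f : Fin n → I) (i j : Fin n) : f j ≤ step n f i j := by
  unfold step
  split
  · exact le_rfl
  · exact le_sup_right

/-- If `f x < f y` implies `g x ≤ g y`, then `f` and `g` are comonotone. -/
lemma comonotone_of_imp {X : Type*} (f g : X → I)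
    (h : ∀ x y, f x < f y → g x ≤ g y) : Comonotone f g := by
  intro x y
  rcases lt_trichotomy (f x) (f y) with hf | hf | hf
  · have hg := h x y hf
    have h1 : (f x : ℝ) - f y ≤ 0 := by
      have : (f x : ℝ) ≤ f y := hf.le
      linarith
    have h2 : (g x : ℝ) - g y ≤ 0 := by
      have : (g x : ℝ) ≤ g y := hg
      linarith
    exact mul_nonneg_iff.mpr (Or.inr ⟨h1, h2⟩)
  · rw [hf]; simp
  · have hg := h y x hf
    have h1 : 0 ≤ (f x : ℝ) - f y := by
      have : (f y : ℝ) ≤ f x := hf.le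
      linarith
    have h2 : 0 ≤ (g x : ℝ) - g y := by
      have : (g y : ℝ) ≤ g x := hg
      linarith
    exact mul_nonneg h1 h2

/-- Invariant: after `k` steps, the value at any index `< k` is below all later values. -/
lemma seqPsi_inv (n : ℕ) (ψ : Fin n → I) :
    ∀ k, ∀ i j : Fin n, i ≤ j → (i : ℕ) < k → seqPsi n ψ k i ≤ seqPsi n ψ k j := by
  intro k
  induction k with
  | zero => intro i j _ hik; omega
  | succ k ih =>
    intro i j hij hik
    by_cases h : k < n
    · rw [seqPsi_succ_of_lt n ψ h]
      unfold step
      by_cases hi : (i : ℕ) < k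
      · rw [if_pos hi]
        by_cases hj : (j : ℕ) < k
        · rw [if_pos hj]
          exact ih i j hij hi
        · rw [if_neg hj]
          exact le_trans (ih i j hij hi) le_sup_right
      · have hieq : (i : ℕ) = k := by omega
        have hj : ¬ (j : ℕ) < k := by
          have := Fin.le_def.mp hij; omega
        rw [if_neg hi, if_neg hj]
        have hfi : seqPsi n ψ k (⟨k, h⟩ : Fin n) = seqPsi n ψ k i := by
          congr 1
          exact Fin.ext hieq.symm
        calc seqPsi n ψ k (⟨k, h⟩ : Fin n) ⊔ seqPsi n ψ k i
            = seqPsi n ψ k i ⊔ seqPsi n ψ k i := by rw [hfi]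
          _ = seqPsi n ψ k i := sup_idem _
          _ = seqPsi n ψ k (⟨k, h⟩ : Fin n) := hfi.symm
          _ ≤ seqPsi n ψ k (⟨k, h⟩ : Fin n) ⊔ seqPsi n ψ k j := le_sup_left
    · have : (i : ℕ) < n := i.isLt
      have hik' : (i : ℕ) < k := by omega
      simp only [seqPsi, dif_neg h]
      exact ih i j hij hik'

/-- All `ψ_k` stay below `φ`. -/
lemma seqPsi_le_phi (n : ℕ) (φ ψ : Fin n → I) (hle : ∀ j, ψ j ≤ φ j) (hφ : Monotone φ) :
    ∀ k j, seqPsi n ψ k j ≤ φ j := by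
  intro k
  induction k with
  | zero => exact hle
  | succ k ih =>
    intro j
    by_cases h : k < n
    · rw [seqPsi_succ_of_lt n ψ h]
      unfold step
      by_cases hj : (j : ℕ) < k
      · rw [if_pos hj]; exact ih j
      · rw [if_neg hj]
        refine sup_le ?_ (ih j)
        refine le_trans (ih _) (hφ ?_)
        exact Fin.le_def.mpr (by simpa using le_of_not_gt hj)
    · simp only [seqPsi, dif_neg h]
      exact ih j

/-- For `ψ ≤ φ` with `φ` nondecreasing, the recursively defined functions satisfy
`ψ ≤ ψ₁ ≤ … ≤ ψ_{n-1} ≤ φ`, consecutive ones are comonotone, and `ψ_{n-1}` is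
nondecreasing (hence comonotone with `φ`). -/
theorem recursive_comonotone_chain (n : ℕ) (hn : 0 < n) (φ ψ : Fin n → I)
    (hle : ∀ j, ψ j ≤ φ j) (hφ : Monotone φ) :
    (∀ k, k < n - 1 → ∀ j, seqPsi n ψ k j ≤ seqPsi n ψ (k + 1) j) ∧
    (∀ j, seqPsi n ψ (n - 1) j ≤ φ j) ∧
    (∀ k, k < n - 1 → Comonotone (seqPsi n ψ k) (seqPsi n ψ (k + 1))) ∧
    (Monotone (seqPsi n ψ (n - 1)) ∧ Comonotone (seqPsi n ψ (n - 1)) φ) := by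
  have hmono : Monotone (seqPsi n ψ (n - 1)) := by
    intro i j hij
    rcases eq_or_lt_of_le hij with rfl | hlt
    · exact le_rfl
    · have hij' : (i : ℕ) < (j : ℕ) := hlt
      have : (i : ℕ) < n - 1 := by have := j.isLt; omega
      exact seqPsi_inv n ψ (n - 1) i j hij this
  refine ⟨?_, seqPsi_le_phi n φ ψ hle hφ (n - 1), ?_, hmono, ?_⟩
  · intro k hk j
    have h : k < n := by omega
    rw [seqPsi_succ_of_lt n ψ h]
    exact le_step n _ _ j
  · intro k hk
    have h : k < n := by omega
    rw [seqPsi_succ_of_lt n ψ h]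
    set f := seqPsi n ψ k with hf
    apply comonotone_of_imp
    intro x y hxy
    unfold step
    by_cases hx : (x : ℕ) < k
    · rw [if_pos hx]
      by_cases hy : (y : ℕ) < k
      · rw [if_pos hy]; exact hxy.le
      · rw [if_neg hy]
        exact le_trans hxy.le le_sup_right
    · rw [if_neg hx]
      by_cases hy : (y : ℕ) < k
      · rw [if_pos hy]
        -- y has index < k ≤ x's index, so f y ≤ f x by invariant; contradicts f x < f y
        have hyx : y ≤ x := Fin.le_def.mpr (by omega)
        have := seqPsi_inv n ψ k y x hyx hy
        exact absurd hxy (not_lt.mpr this)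
      · rw [if_neg hy]
        exact sup_le_sup_left hxy.le _
  · apply comonotone_of_imp
    intro x y hxy
    have hxy' : x ≤ y := by
      by_contra hc
      exact absurd hxy (not_lt.mpr (hmono (le_of_not_ge hc)))
    exact hφ hxy'
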